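/- arXiv:1709.01865 — 2 statements merged into one kernel-verified Lean document; each statement's English description precedes it below -/
import Mathlib

section
/- Let $c \geq 2$ be an integer. The fusion coefficients $N^c$ are associative: for all $1 \leq t, t', t'', u \leq c-1$, $\sum_{s=1}^{c-1} N^c_{t, t', s}\, N^c_{s, t'', u} = \sum_{s=1}^{c-1} N^c_{t', t'', s}\, N^c_{t, s, u}$. -/
set_option maxHeartbeats 2000000
private lemma fusionN_ite_mul (p q : Prop) [Decidable p] [Decidable q] :
    (if p then (1:ℤ) else 0) * (if q then 1 else 0) = if p ∧ q then 1 else 0 := by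
  split_ifs <;> simp_all

/-- The `sl₂` fusion rule multiplicity `N^c_{t,t',t''}`. -/
def fusionN (c t t' t'' : ℤ) : ℤ :=
  if |t - t'| + 1 ≤ t'' ∧ t'' ≤ min (t + t' - 1) (2 * c - t - t' - 1) ∧ Odd (t + t' + t'')
  then 1 else 0

/-- associativity of the fusion coefficients. -/
theorem fusionN_assoc (c : ℤ) (hc : 2 ≤ c) (t t' t'' u : ℤ)
    (ht : 1 ≤ t ∧ t ≤ c - 1) (ht' : 1 ≤ t' ∧ t' ≤ c - 1)
    (ht'' : 1 ≤ t'' ∧ t'' ≤ c - 1) (hu : 1 ≤ u ∧ u ≤ c - 1) :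
    ∑ s ∈ Finset.Icc 1 (c - 1), fusionN c t t' s * fusionN c s t'' u
      = ∑ s ∈ Finset.Icc 1 (c - 1), fusionN c t' t'' s * fusionN c t s u := by
  simp only [fusionN, fusionN_ite_mul, Finset.sum_boole]
  norm_cast
  apply Finset.card_bij
    (fun s _ => s + max (max (t' - t'') (t'' - t')) (max (t - u) (u - t))
                  - max (max (t - t') (t' - t)) (max (t'' - u) (u - t'')))
  case hi =>
    intro s hs
    simp only [Finset.mem_filter, Finset.mem_Icc, le_min_iff, Int.odd_iff,
      abs_eq_max_neg, neg_sub] at hs ⊢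
    omega
  case i_inj =>
    intro a ha b hb h
    omega
  case i_surj =>
    intro y hy
    refine ⟨y - (max (max (t' - t'') (t'' - t')) (max (t - u) (u - t))
                  - max (max (t - t') (t' - t)) (max (t'' - u) (u - t''))), ?_, by ring⟩
    simp only [Finset.mem_filter, Finset.mem_Icc, le_min_iff, Int.odd_iff,
      abs_eq_max_neg, neg_sub] at hy ⊢
    omega
end

section
/- Let $a, b$ be coprime positive integers with $a \geq 2$ and $b$ odd, and let $1 \leq r, s \leq a-1$. If for all $1 \leq r' \leq a-1$ one has $(-1)^{(r+1)r'b}\,\frac{\sin(\pi b r r'/a)}{\sin(\pi b r'/a)} = (-1)^{(s+1)r'b}\,\frac{\sin(\pi b s r'/a)}{\sin(\pi b r'/a)}$, then $r = s$. -/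
open Real

private noncomputable def Fh (a b r k : ℕ) : ℝ :=
  (-1 : ℝ) ^ ((r + 1) * k * b) * Real.sin (π * b * r * k / a)

private lemma negone_pow_eq_of_even_add {m n : ℕ} (h : Even (m + n)) :
    (-1 : ℝ) ^ m = (-1) ^ n := by
  have hiff := Nat.even_add.mp h
  by_cases hm : Even m
  · rw [hm.neg_one_pow, (hiff.mp hm).neg_one_pow]
  · rw [(Nat.not_even_iff_odd.mp hm).neg_one_pow,
      (Nat.not_even_iff_odd.mp (fun hn => hm (hiff.mpr hn))).neg_one_pow]

private lemma Fh_period (a b r k : ℕ) (ha : (a : ℝ) ≠ 0) :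
    Fh a b r (k + 2 * a) = Fh a b r k := by
  unfold Fh
  have hsign : (-1 : ℝ) ^ ((r + 1) * (k + 2 * a) * b) = (-1) ^ ((r + 1) * k * b) :=
    negone_pow_eq_of_even_add ⟨(r + 1) * k * b + (r + 1) * a * b, by ring⟩
  have harg : (π * b * r * ((k + 2 * a : ℕ) : ℝ) / a)
      = π * b * r * k / a + ((b * r : ℕ) : ℝ) * (2 * π) := by
    push_cast
    field_simp
  rw [hsign, harg, Real.sin_add_nat_mul_two_pi]

private lemma Fh_reflect (a b r k : ℕ) (ha : (a : ℝ) ≠ 0) (hk : k ≤ 2 * a) :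
    Fh a b r (2 * a - k) = - Fh a b r k := by
  unfold Fh
  have hsign : (-1 : ℝ) ^ ((r + 1) * (2 * a - k) * b) = (-1) ^ ((r + 1) * k * b) := by
    refine negone_pow_eq_of_even_add ⟨(r + 1) * a * b, ?_⟩
    have hsum : (2 * a - k) + k = 2 * a := by omega
    calc (r + 1) * (2 * a - k) * b + (r + 1) * k * b
        = (r + 1) * ((2 * a - k) + k) * b := by ring
      _ = (r + 1) * (2 * a) * b := by rw [hsum]
      _ = (r + 1) * a * b + (r + 1) * a * b := by ring
  have harg : π * b * r * ((2 * a - k : ℕ) : ℝ) / a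
      = -(π * b * r * k / a) + ((b * r : ℕ) : ℝ) * (2 * π) := by
    rw [Nat.cast_sub hk]
    push_cast
    field_simp
    ring
  rw [hsign, harg, Real.sin_add_nat_mul_two_pi, Real.sin_neg]
  ring

private lemma Fh_eval1 (a b r c t : ℕ) (ha : (a : ℝ) ≠ 0) (hbc : b * c = 2 * a * t + 1) :
    Fh a b r c = (-1 : ℝ) ^ (r + 1) * Real.sin (π * r / a) := by
  unfold Fh
  have hsign : (-1 : ℝ) ^ ((r + 1) * c * b) = (-1) ^ (r + 1) := by
    have he : (r + 1) * c * b = 2 * ((r + 1) * (a * t)) + (r + 1) := by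
      calc (r + 1) * c * b = (r + 1) * (b * c) := by ring
        _ = (r + 1) * (2 * a * t + 1) := by rw [hbc]
        _ = 2 * ((r + 1) * (a * t)) + (r + 1) := by ring
    rw [he, pow_add, pow_mul, neg_one_sq, one_pow, one_mul]
  have hbc' : (b : ℝ) * c = 2 * a * t + 1 := by exact_mod_cast hbc
  have harg : π * b * r * c / a = π * r / a + ((r * t : ℕ) : ℝ) * (2 * π) := by
    have h1 : π * (b : ℝ) * r * c / a = π * r * ((b : ℝ) * c) / a := by ring
    rw [h1, hbc']
    push_cast
    field_simp
    ring
  rw [hsign, harg, Real.sin_add_nat_mul_two_pi]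

private lemma Fh_eval2 (a b r c t : ℕ) (ha : (a : ℝ) ≠ 0) (hbc : b * c = 2 * a * t + 1) :
    Fh a b r (2 * c) = Real.sin (2 * π * r / a) := by
  unfold Fh
  have hsign : (-1 : ℝ) ^ ((r + 1) * (2 * c) * b) = 1 := by
    have he : Even ((r + 1) * (2 * c) * b) := ⟨(r + 1) * c * b, by ring⟩
    exact he.neg_one_pow
  have hbc' : (b : ℝ) * c = 2 * a * t + 1 := by exact_mod_cast hbc
  have harg : π * b * r * ((2 * c : ℕ) : ℝ) / a
      = 2 * π * r / a + ((2 * (r * t) : ℕ) : ℝ) * (2 * π) := by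
    push_cast
    have h1 : π * (b : ℝ) * r * (2 * c) / a = 2 * (π * r * ((b : ℝ) * c)) / a := by ring
    rw [h1, hbc']
    field_simp
    ring
  rw [hsign, harg, Real.sin_add_nat_mul_two_pi, one_mul]

/-- for `b` odd, the normalized Hopf link data
`r' ↦ (-1)^((r+1)r'b) sin(πbrr'/a)/sin(πbr'/a)` separate the simple objects `M_{r,1}`. -/
theorem hopf_separates (a b : ℕ) (ha : 2 ≤ a) (hb : 0 < b) (hodd : Odd b)
    (hab : Nat.Coprime a b) (r s : ℕ) (hr : 1 ≤ r ∧ r ≤ a - 1) (hs : 1 ≤ s ∧ s ≤ a - 1)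
    (h : ∀ r' ∈ Finset.Icc 1 (a - 1),
        (-1 : ℝ) ^ ((r + 1) * r' * b) * sin (π * b * r * r' / a) / sin (π * b * r' / a)
          = (-1 : ℝ) ^ ((s + 1) * r' * b) * sin (π * b * s * r' / a) / sin (π * b * r' / a)) :
    r = s := by
  obtain ⟨hr1, hr2⟩ := hr
  obtain ⟨hs1, hs2⟩ := hs
  have ha0 : 0 < a := by omega
  have haR : (a : ℝ) ≠ 0 := Nat.cast_ne_zero.mpr (by omega)
  have haRpos : (0 : ℝ) < a := by exact_mod_cast ha0
  -- the denominators are nonzero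
  have hden : ∀ k ∈ Finset.Icc 1 (a - 1), Real.sin (π * b * k / a) ≠ 0 := by
    intro k hk hzero
    simp only [Finset.mem_Icc] at hk
    obtain ⟨n, hn⟩ := Real.sin_eq_zero_iff.mp hzero
    have hn' : (n : ℝ) * π * a = π * ((b : ℝ) * k) := by
      field_simp at hn
      linear_combination π * hn
    have hn'' : π * ((n : ℝ) * a) = π * ((b : ℝ) * k) := by ring_nf; ring_nf at hn'; linarith
    have hcast : (n : ℝ) * a = (b : ℝ) * k := mul_left_cancel₀ Real.pi_ne_zero hn''
    have hint : n * (a : ℤ) = (b : ℤ) * k := by exact_mod_cast hcast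
    have hdvdZ : (a : ℤ) ∣ (b : ℤ) * k := ⟨n, by linarith⟩
    have hdvd : a ∣ b * k := by exact_mod_cast hdvdZ
    have hdvdk : a ∣ k := (Nat.Coprime.dvd_of_dvd_mul_left hab) hdvd
    have := Nat.le_of_dvd (by omega) hdvdk
    omega
  -- the base equality, from the hypothesis
  have base : ∀ k ∈ Finset.Icc 1 (a - 1), Fh a b r k = Fh a b s k := by
    intro k hk
    have hD := hden k hk
    have hx := h k hk
    unfold Fh
    calc (-1 : ℝ) ^ ((r + 1) * k * b) * Real.sin (π * b * r * k / a)
        = (-1 : ℝ) ^ ((r + 1) * k * b) * Real.sin (π * b * r * k / a)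
            / Real.sin (π * b * k / a) * Real.sin (π * b * k / a) := by
          rw [div_mul_cancel₀ _ hD]
      _ = (-1 : ℝ) ^ ((s + 1) * k * b) * Real.sin (π * b * s * k / a)
            / Real.sin (π * b * k / a) * Real.sin (π * b * k / a) := by rw [hx]
      _ = (-1 : ℝ) ^ ((s + 1) * k * b) * Real.sin (π * b * s * k / a) := by
          rw [div_mul_cancel₀ _ hD]
  -- extend to all natural numbers
  have hall : ∀ k, Fh a b r k = Fh a b s k := by
    intro k
    induction k using Nat.strong_induction_on with
    | _ k ih =>
      by_cases h2a : 2 * a ≤ k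
      · have hk : k = (k - 2 * a) + 2 * a := by omega
        rw [hk, Fh_period a b r _ haR, Fh_period a b s _ haR]
        exact ih (k - 2 * a) (by omega)
      · by_cases hk0 : k = 0
        · subst hk0
          unfold Fh
          simp
        · by_cases hka : k = a
          · have hFa : ∀ m : ℕ, Fh a b m a = 0 := by
              intro m
              unfold Fh
              have harg : π * (b : ℝ) * m * a / a = ((b * m : ℕ) : ℝ) * π := by
                push_cast; field_simp
              rw [harg, Real.sin_nat_mul_pi, mul_zero]
            rw [hka, hFa r, hFa s]
          · by_cases hlt : k ≤ a - 1
            · exact base k (Finset.mem_Icc.mpr ⟨by omega, hlt⟩)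
            · -- a < k < 2a
              have hkr := Fh_reflect a b r (2 * a - k) haR (by omega)
              have hks := Fh_reflect a b s (2 * a - k) haR (by omega)
              have h2 : 2 * a - (2 * a - k) = k := by omega
              rw [h2] at hkr hks
              rw [hkr, hks, base (2 * a - k) (Finset.mem_Icc.mpr ⟨by omega, by omega⟩)]
  -- find the inverse of b modulo 2a
  have hcop : Nat.Coprime b (2 * a) :=
    Nat.Coprime.mul_right (Nat.coprime_two_right.mpr hodd) hab.symm
  obtain ⟨c, -, hc⟩ := Nat.exists_mul_mod_eq_one_of_coprime hcop (by omega)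
  have hbc : b * c = 2 * a * (b * c / (2 * a)) + 1 := by
    conv_lhs => rw [← Nat.div_add_mod (b * c) (2 * a)]
    rw [hc]
  set t := b * c / (2 * a) with ht
  -- the two key equalities
  have e1 : (-1 : ℝ) ^ (r + 1) * Real.sin (π * r / a)
      = (-1 : ℝ) ^ (s + 1) * Real.sin (π * s / a) := by
    have := hall c
    rwa [Fh_eval1 a b r c t haR hbc, Fh_eval1 a b s c t haR hbc] at this
  have e2 : Real.sin (2 * π * r / a) = Real.sin (2 * π * s / a) := by
    have := hall (2 * c)
    rwa [Fh_eval2 a b r c t haR hbc, Fh_eval2 a b s c t haR hbc] at this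
  -- positivity of sines
  have hrR : (0 : ℝ) < r := by exact_mod_cast hr1
  have hsR : (0 : ℝ) < s := by exact_mod_cast hs1
  have hruR : (r : ℝ) < a := by exact_mod_cast (by omega : r < a)
  have hsuR : (s : ℝ) < a := by exact_mod_cast (by omega : s < a)
  have hπ := Real.pi_pos
  have hrlt : π * r / a < π := by rw [div_lt_iff₀ haRpos]; nlinarith
  have hslt : π * s / a < π := by rw [div_lt_iff₀ haRpos]; nlinarith
  have hrpos0 : 0 < π * r / a := by positivity
  have hspos0 : 0 < π * s / a := by positivity
  have hrpos : 0 < Real.sin (π * r / a) := Real.sin_pos_of_pos_of_lt_pi hrpos0 hrlt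
  have hspos : 0 < Real.sin (π * s / a) := Real.sin_pos_of_pos_of_lt_pi hspos0 hslt
  -- from e1, the sines agree
  have hsin : Real.sin (π * r / a) = Real.sin (π * s / a) := by
    rcases Nat.even_or_odd (r + 1) with hpr | hpr <;>
      rcases Nat.even_or_odd (s + 1) with hps | hps
    · rwa [hpr.neg_one_pow, hps.neg_one_pow, one_mul, one_mul] at e1
    · rw [hpr.neg_one_pow, hps.neg_one_pow, one_mul, neg_one_mul] at e1; linarith
    · rw [hpr.neg_one_pow, hps.neg_one_pow, neg_one_mul, one_mul] at e1; linarith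
    · rwa [hpr.neg_one_pow, hps.neg_one_pow, neg_one_mul, neg_one_mul, neg_inj] at e1
  -- from e2, the cosines agree
  have e2' : Real.sin (2 * (π * r / a)) = Real.sin (2 * (π * s / a)) := by
    have h1 : 2 * π * (r : ℝ) / a = 2 * (π * r / a) := by ring
    have h2 : 2 * π * (s : ℝ) / a = 2 * (π * s / a) := by ring
    rw [← h1, ← h2]; exact e2
  rw [Real.sin_two_mul, Real.sin_two_mul, hsin] at e2'
  have hcos : Real.cos (π * r / a) = Real.cos (π * s / a) :=
    mul_left_cancel₀ (mul_pos two_pos hspos).ne' e2'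
  have heq : π * r / a = π * s / a :=
    Real.injOn_cos ⟨le_of_lt hrpos0, le_of_lt hrlt⟩ ⟨le_of_lt hspos0, le_of_lt hslt⟩ hcos
  field_simp at heq
  exact_mod_cast heq
end
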